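/- arXiv:1509.03427 — 2 statements merged into one kernel-verified Lean document; each statement's English description precedes it below -/
import Mathlib

section
/- Stochastic invariance of the Lyapunov sublevel set: if A_cl Q A_clᵀ + F̃ F̃ᵀ ⪯ Q for a positive semidefinite Q, and a square-integrable random vector E(t) satisfies E[E(t) E(t)ᵀ] ⪯ Q, then E(t+1) = A_cl E(t) + F̃ W(t), with W(t) zero-mean, unit-covariance, and independent of E(t), satisfies E[E(t+1) E(t+1)ᵀ] ⪯ Q. -/
open Matrix MeasureTheory ProbabilityTheory

/-! The centred noise `W` is independent of `E`, so the cross moments of `Acl E` and `Ft W` vanish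
and the second moment follows the recursion `M' = Acl M Aclᵀ + Ft Ftᵀ`. Congruence by `Acl`
preserves `M ⪯ Q`, hence `M' ⪯ Acl Q Aclᵀ + Ft Ftᵀ ⪯ Q`. -/

/-- Loewner order: `A ⪯ B` iff `B - A` is positive semidefinite. -/
def LoewnerLE {N : ℕ} (A B : Matrix (Fin N) (Fin N) ℝ) : Prop := (B - A).PosSemidef

namespace LoewnerLE

variable {N : ℕ} {A B C : Matrix (Fin N) (Fin N) ℝ}

theorem trans (hAB : LoewnerLE A B) (hBC : LoewnerLE B C) : LoewnerLE A C := by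
  simpa [LoewnerLE] using hBC.add hAB

theorem add_right (hAB : LoewnerLE A B) (C : Matrix (Fin N) (Fin N) ℝ) :
    LoewnerLE (A + C) (B + C) := by
  simpa [LoewnerLE] using hAB

theorem mul_mul_transpose {M : ℕ} (hAB : LoewnerLE A B) (P : Matrix (Fin M) (Fin N) ℝ) :
    LoewnerLE (P * A * Pᵀ) (P * B * Pᵀ) := by
  simpa [LoewnerLE, Matrix.mul_sub, Matrix.sub_mul] using hAB.mul_mul_conjTranspose_same P

end LoewnerLE

section CrossMoment

variable {Ω : Type*} [MeasurableSpace Ω] {μ : Measure Ω} {l m n k : Type*}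

noncomputable def crossMoment (μ : Measure Ω) (X : Ω → m → ℝ) (Y : Ω → n → ℝ) : Matrix m n ℝ :=
  of fun i j => ∫ ω, X ω i * Y ω j ∂μ

theorem transpose_crossMoment (X : Ω → m → ℝ) (Y : Ω → n → ℝ) :
    (crossMoment μ X Y)ᵀ = crossMoment μ Y X := by
  ext i j
  simp only [crossMoment, transpose_apply, of_apply, mul_comm]

variable {X X' : Ω → m → ℝ} {Y : Ω → n → ℝ}

theorem memLp_mulVec_apply [Fintype m] {p : ENNReal} (A : Matrix l m ℝ)
    (hX : ∀ j, MemLp (fun ω => X ω j) p μ) (i : l) :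
    MemLp (fun ω => (A *ᵥ X ω) i) p μ := by
  simpa only [mulVec, dotProduct] using
    memLp_finsetSum Finset.univ fun j _ => (hX j).const_mul (A i j)

theorem crossMoment_add_left (hX : ∀ i, MemLp (fun ω => X ω i) 2 μ)
    (hX' : ∀ i, MemLp (fun ω => X' ω i) 2 μ) (hY : ∀ j, MemLp (fun ω => Y ω j) 2 μ) :
    crossMoment μ (fun ω => X ω + X' ω) Y = crossMoment μ X Y + crossMoment μ X' Y := by
  ext i j
  simp only [crossMoment, of_apply, Matrix.add_apply, Pi.add_apply, add_mul]
  exact integral_add ((hX i).integrable_mul (hY j)) ((hX' i).integrable_mul (hY j))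

theorem crossMoment_add_right {Y Y' : Ω → n → ℝ} (hX : ∀ i, MemLp (fun ω => X ω i) 2 μ)
    (hY : ∀ j, MemLp (fun ω => Y ω j) 2 μ) (hY' : ∀ j, MemLp (fun ω => Y' ω j) 2 μ) :
    crossMoment μ X (fun ω => Y ω + Y' ω) = crossMoment μ X Y + crossMoment μ X Y' := by
  rw [← transpose_crossMoment, crossMoment_add_left hY hY' hX, transpose_add,
    transpose_crossMoment, transpose_crossMoment]

theorem crossMoment_mulVec_left [Fintype m] (A : Matrix l m ℝ)
    (hX : ∀ i, MemLp (fun ω => X ω i) 2 μ) (hY : ∀ j, MemLp (fun ω => Y ω j) 2 μ) :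
    crossMoment μ (fun ω => A *ᵥ X ω) Y = A * crossMoment μ X Y := by
  ext i j
  simp only [crossMoment, of_apply, mul_apply, mulVec, dotProduct, Finset.sum_mul, mul_assoc]
  have hint (k : m) : Integrable (fun ω => A i k * (X ω k * Y ω j)) μ :=
    ((hX k).integrable_mul (hY j)).const_mul (A i k)
  simp only [integral_finsetSum _ fun k _ => hint k, integral_const_mul]

theorem crossMoment_mulVec_right [Fintype n] (B : Matrix k n ℝ)
    (hX : ∀ i, MemLp (fun ω => X ω i) 2 μ) (hY : ∀ j, MemLp (fun ω => Y ω j) 2 μ) :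
    crossMoment μ X (fun ω => B *ᵥ Y ω) = crossMoment μ X Y * Bᵀ := by
  rw [← transpose_crossMoment, crossMoment_mulVec_left B hY hX, transpose_mul,
    transpose_crossMoment]

theorem crossMoment_eq_zero_of_indepFun (hXY : IndepFun X Y μ)
    (hX : ∀ i, AEStronglyMeasurable (fun ω => X ω i) μ)
    (hY : ∀ j, AEStronglyMeasurable (fun ω => Y ω j) μ) (hY0 : ∀ j, ∫ ω, Y ω j ∂μ = 0) :
    crossMoment μ X Y = 0 := by
  ext i j
  have hXYij : IndepFun (fun ω => X ω i) (fun ω => Y ω j) μ :=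
    hXY.comp (measurable_pi_apply i) (measurable_pi_apply j)
  rw [crossMoment, of_apply, Matrix.zero_apply,
    hXYij.integral_fun_mul_eq_mul_integral (hX i) (hY j), hY0 j, mul_zero]

theorem crossMoment_mulVec_add_mulVec_of_indepFun [Fintype m] [Fintype n] {W : Ω → n → ℝ}
    (A : Matrix l m ℝ) (F : Matrix l n ℝ) (hX : ∀ i, MemLp (fun ω => X ω i) 2 μ)
    (hW : ∀ j, MemLp (fun ω => W ω j) 2 μ) (hXW : IndepFun X W μ)
    (hW0 : ∀ j, ∫ ω, W ω j ∂μ = 0) :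
    crossMoment μ (fun ω => A *ᵥ X ω + F *ᵥ W ω) (fun ω => A *ᵥ X ω + F *ᵥ W ω)
      = A * crossMoment μ X X * Aᵀ + F * crossMoment μ W W * Fᵀ := by
  have hAX := memLp_mulVec_apply A hX
  have hFW := memLp_mulVec_apply F hW
  have hXW0 : crossMoment μ X W = 0 :=
    crossMoment_eq_zero_of_indepFun hXW (fun i => (hX i).1) (fun j => (hW j).1) hW0
  have hWX0 : crossMoment μ W X = 0 := by rw [← transpose_crossMoment, hXW0, transpose_zero]
  have hSum : ∀ i, MemLp (fun ω => (A *ᵥ X ω + F *ᵥ W ω) i) 2 μ := fun i => (hAX i).add (hFW i)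
  rw [crossMoment_add_left hAX hFW hSum,
    crossMoment_add_right hAX hAX hFW, crossMoment_add_right hFW hAX hFW,
    crossMoment_mulVec_left A hX hAX, crossMoment_mulVec_left A hX hFW,
    crossMoment_mulVec_left F hW hAX, crossMoment_mulVec_left F hW hFW,
    crossMoment_mulVec_right A hX hX, crossMoment_mulVec_right F hX hW,
    crossMoment_mulVec_right A hW hX, crossMoment_mulVec_right F hW hW, hXW0, hWX0]
  simp only [Matrix.mul_zero, Matrix.zero_mul, add_zero, zero_add, Matrix.mul_assoc]

end CrossMoment

theorem stochastic_invariance_general (N d : ℕ)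
    {Ω : Type*} [MeasurableSpace Ω] (μ : Measure Ω)
    (Acl : Matrix (Fin N) (Fin N) ℝ) (Ft : Matrix (Fin N) (Fin d) ℝ)
    (Q : Matrix (Fin N) (Fin N) ℝ)
    (hLyap : LoewnerLE (Acl * Q * Aclᵀ + Ft * Ftᵀ) Q)
    (E : Ω → (Fin N → ℝ)) (W : Ω → (Fin d → ℝ))
    (hE2 : ∀ i, MemLp (fun ω => E ω i) 2 μ)
    (hW2 : ∀ i, MemLp (fun ω => W ω i) 2 μ)
    (hindep : IndepFun E W μ)
    (hWmean : ∀ i, (∫ ω, W ω i ∂μ) = 0)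
    (hWcov : ∀ i j, (∫ ω, W ω i * W ω j ∂μ) = (1 : Matrix (Fin d) (Fin d) ℝ) i j)
    (hEmom : LoewnerLE (Matrix.of fun i j => ∫ ω, E ω i * E ω j ∂μ) Q)
    (E' : Ω → (Fin N → ℝ)) (hE' : ∀ ω, E' ω = Acl.mulVec (E ω) + Ft.mulVec (W ω)) :
    LoewnerLE (Matrix.of fun i j => ∫ ω, E' ω i * E' ω j ∂μ) Q := by
  have hWW : crossMoment μ W W = 1 := Matrix.ext hWcov
  have hE'E' : crossMoment μ E' E' = Acl * crossMoment μ E E * Aclᵀ + Ft * Ftᵀ := by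
    rw [funext hE', crossMoment_mulVec_add_mulVec_of_indepFun Acl Ft hE2 hW2 hindep hWmean, hWW,
      Matrix.mul_one]
  change LoewnerLE (crossMoment μ E' E') Q
  rw [hE'E']
  exact ((hEmom.mul_mul_transpose Acl).add_right _).trans hLyap

theorem stochastic_invariance (N d : ℕ)
    {Ω : Type*} [MeasurableSpace Ω] (μ : Measure Ω) [IsProbabilityMeasure μ]
    (Acl : Matrix (Fin N) (Fin N) ℝ) (Ft : Matrix (Fin N) (Fin d) ℝ)
    (Q : Matrix (Fin N) (Fin N) ℝ) (hQ : Q.PosSemidef)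
    (hLyap : LoewnerLE (Acl * Q * Aclᵀ + Ft * Ftᵀ) Q)
    (E : Ω → (Fin N → ℝ)) (W : Ω → (Fin d → ℝ))
    (hEmeas : Measurable E) (hWmeas : Measurable W)
    (hE2 : ∀ i, MemLp (fun ω => E ω i) 2 μ)
    (hW2 : ∀ i, MemLp (fun ω => W ω i) 2 μ)
    (hindep : IndepFun E W μ)
    (hWmean : ∀ i, (∫ ω, W ω i ∂μ) = 0)
    (hWcov : ∀ i j, (∫ ω, W ω i * W ω j ∂μ) = (1 : Matrix (Fin d) (Fin d) ℝ) i j)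
    (hEmom : LoewnerLE (Matrix.of fun i j => ∫ ω, E ω i * E ω j ∂μ) Q)
    (E' : Ω → (Fin N → ℝ)) (hE' : ∀ ω, E' ω = Acl.mulVec (E ω) + Ft.mulVec (W ω)) :
    LoewnerLE (Matrix.of fun i j => ∫ ω, E' ω i * E' ω j ∂μ) Q :=
  stochastic_invariance_general N d μ Acl Ft Q hLyap E W hE2 hW2 hindep hWmean hWcov hEmom E' hE'
end

section
/- Under the hypotheses of the stochastic Lyapunov inequality A_cl Q A_clᵀ + F̃ F̃ᵀ ⪯ Q and initial condition E[E(0) E(0)ᵀ] ⪯ Q, the expected output deviation is uniformly bounded: for all t, E[‖M E(t)‖] ≤ sqrt(trace(M Q Mᵀ)) for any matrix M of compatible dimensions. -/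
/-!
Write `Σₜ = 𝔼[E(t) E(t)ᵀ]`. Since `W(t)` is centred, isotropic and independent of `E(t)`, the
cross term of `E(t+1) = A_cl E(t) + F̃ W(t)` vanishes and `Σₜ₊₁ = A_cl Σₜ A_clᵀ + F̃ F̃ᵀ`. This
map is monotone, so the Lyapunov inequality makes `{Σ ⪯ Q}` invariant and `Σₜ ⪯ Q` for all `t`.
Jensen for the concave square root then gives
`𝔼‖M E(t)‖ ≤ √(𝔼‖M E(t)‖²) = √(tr (M Σₜ Mᵀ)) ≤ √(tr (M Q Mᵀ))`.
-/

open Matrix MeasureTheory ProbabilityTheory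

namespace Matrix

variable {m n R : Type*} [Fintype m] [Fintype n] [CommSemiring R]

lemma dotProduct_mul_mul_transpose_mulVec (A : Matrix m n R) (S : Matrix n n R) (v : m → R) :
    v ⬝ᵥ (A * S * Aᵀ) *ᵥ v = (v ᵥ* A) ⬝ᵥ S *ᵥ (v ᵥ* A) := by
  rw [← mulVec_mulVec, ← mulVec_mulVec, mulVec_transpose, dotProduct_mulVec]

lemma trace_mul_mul_transpose (M : Matrix m n R) (S : Matrix n n R) :
    trace (M * S * Mᵀ) = ∑ i, M i ⬝ᵥ S *ᵥ M i := by
  simp only [trace, diag, mul_apply, transpose_apply, dotProduct, mulVec, Finset.mul_sum,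
    Finset.sum_mul]
  refine Finset.sum_congr rfl fun i _ => ?_
  rw [Finset.sum_comm]
  exact Finset.sum_congr rfl fun k _ => Finset.sum_congr rfl fun j _ => by ring

end Matrix

lemma LoewnerLE.dotProduct_mulVec_le {N : ℕ} {A B : Matrix (Fin N) (Fin N) ℝ}
    (h : LoewnerLE A B) (v : Fin N → ℝ) : v ⬝ᵥ A *ᵥ v ≤ v ⬝ᵥ B *ᵥ v := by
  have hnonneg := h.dotProduct_mulVec_nonneg v
  simp only [star_trivial, sub_mulVec, dotProduct_sub] at hnonneg
  linarith

lemma dotProduct_lyapunov_mulVec_le {N d : ℕ} {A : Matrix (Fin N) (Fin N) ℝ}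
    {F : Matrix (Fin N) (Fin d) ℝ} {S Q : Matrix (Fin N) (Fin N) ℝ}
    (hS : ∀ u, u ⬝ᵥ S *ᵥ u ≤ u ⬝ᵥ Q *ᵥ u) (hLyap : LoewnerLE (A * Q * Aᵀ + F * Fᵀ) Q)
    (v : Fin N → ℝ) : v ⬝ᵥ (A * S * Aᵀ + F * Fᵀ) *ᵥ v ≤ v ⬝ᵥ Q *ᵥ v := by
  have hQ := hLyap.dotProduct_mulVec_le v
  simp only [add_mulVec, dotProduct_add, dotProduct_mul_mul_transpose_mulVec] at hQ ⊢
  linarith [hS (v ᵥ* A)]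

namespace MeasureTheory

variable {Ω : Type*} [MeasurableSpace Ω] {μ : Measure Ω}

lemma integral_sqrt_le_sqrt_integral [IsProbabilityMeasure μ] {f : Ω → ℝ}
    (hf : Integrable f μ) (hf0 : 0 ≤ᵐ[μ] f) :
    ∫ ω, √(f ω) ∂μ ≤ √(∫ ω, f ω ∂μ) := by
  have hsqrt : MemLp (fun ω => √(f ω)) 2 μ := by
    refine (memLp_two_iff_integrable_sq
      (Real.continuous_sqrt.comp_aestronglyMeasurable hf.1)).2 (hf.congr ?_)
    filter_upwards [hf0] with ω hω using (Real.sq_sqrt hω).symm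
  exact Real.strictConcaveOn_sqrt.concaveOn.le_map_integral Real.continuous_sqrt.continuousOn
    isClosed_Ici hf0 hf (hsqrt.integrable one_le_two)

variable {ι : Type*} [Fintype ι]

lemma memLp_dotProduct {p : ENNReal} {X : Ω → ι → ℝ} (hX : ∀ i, MemLp (fun ω => X ω i) p μ)
    (v : ι → ℝ) : MemLp (fun ω => v ⬝ᵥ X ω) p μ :=
  memLp_finsetSum Finset.univ fun i _ => (hX i).const_mul (v i)

lemma integral_dotProduct_eq_zero {X : Ω → ι → ℝ} (hX : ∀ i, Integrable (fun ω => X ω i) μ)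
    (hX0 : ∀ i, ∫ ω, X ω i ∂μ = 0) (v : ι → ℝ) : ∫ ω, v ⬝ᵥ X ω ∂μ = 0 := by
  simp only [dotProduct]
  rw [integral_finsetSum _ fun i _ => (hX i).const_mul (v i)]
  simp [integral_const_mul, hX0]

end MeasureTheory

namespace ProbabilityTheory

variable {Ω : Type*} [MeasurableSpace Ω] {μ : Measure Ω}

noncomputable def secondMoment {ι : Type*} (μ : Measure Ω) (X : Ω → ι → ℝ) : Matrix ι ι ℝ :=
  of fun i j => ∫ ω, X ω i * X ω j ∂μ

lemma IndepFun.integral_add_sq {X Y : Ω → ℝ} (hXY : IndepFun X Y μ) (hX : MemLp X 2 μ)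
    (hY : MemLp Y 2 μ) (hY0 : ∫ ω, Y ω ∂μ = 0) :
    ∫ ω, (X ω + Y ω) ^ 2 ∂μ = ∫ ω, X ω ^ 2 ∂μ + ∫ ω, Y ω ^ 2 ∂μ := by
  have hcross : ∫ ω, 2 * (X ω * Y ω) ∂μ = 0 := by
    rw [integral_const_mul, hXY.integral_fun_mul_eq_mul_integral hX.1 hY.1, hY0, mul_zero,
      mul_zero]
  have hexpand : ∀ ω, (X ω + Y ω) ^ 2 = X ω ^ 2 + (Y ω ^ 2 + 2 * (X ω * Y ω)) := fun ω => by ring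
  have hXY2 : Integrable (fun ω => 2 * (X ω * Y ω)) μ := (hX.integrable_mul hY).const_mul 2
  have hrest : Integrable (fun ω => Y ω ^ 2 + 2 * (X ω * Y ω)) μ := hY.integrable_sq.add hXY2
  simp_rw [hexpand]
  rw [integral_add hX.integrable_sq hrest, integral_add hY.integrable_sq hXY2, hcross, add_zero]

variable {ι κ m : Type*} [Fintype ι] [Fintype κ] [Fintype m]

lemma integral_dotProduct_sq {X : Ω → ι → ℝ} (hX : ∀ i, MemLp (fun ω => X ω i) 2 μ)
    (v : ι → ℝ) : ∫ ω, (v ⬝ᵥ X ω) ^ 2 ∂μ = v ⬝ᵥ secondMoment μ X *ᵥ v := by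
  have hint : ∀ i j, Integrable (fun ω => v i * v j * (X ω i * X ω j)) μ :=
    fun i j => ((hX i).integrable_mul (hX j)).const_mul (v i * v j)
  have hexpand : ∀ ω, (v ⬝ᵥ X ω) ^ 2 = ∑ i, ∑ j, v i * v j * (X ω i * X ω j) := by
    intro ω
    simp only [sq, dotProduct, Finset.sum_mul_sum]
    exact Finset.sum_congr rfl fun i _ => Finset.sum_congr rfl fun j _ => by ring
  simp_rw [hexpand]
  rw [integral_finsetSum _ fun i _ => integrable_finsetSum _ fun j _ => hint i j]
  simp_rw [integral_finsetSum _ fun j _ => hint _ j, integral_const_mul]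
  simp only [secondMoment, dotProduct, mulVec, of_apply, Finset.mul_sum]
  exact Finset.sum_congr rfl fun i _ => Finset.sum_congr rfl fun j _ => by ring

lemma integral_sqrt_sum_mulVec_sq_le [IsProbabilityMeasure μ] {X : Ω → ι → ℝ}
    (hX : ∀ i, MemLp (fun ω => X ω i) 2 μ) (M : Matrix κ ι ℝ) :
    ∫ ω, √(∑ k, (M *ᵥ X ω) k ^ 2) ∂μ ≤ √(trace (M * secondMoment μ X * Mᵀ)) := by
  have hint : ∀ k, Integrable (fun ω => (M *ᵥ X ω) k ^ 2) μ :=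
    fun k => (memLp_dotProduct hX (M k)).integrable_sq
  have hsum : ∫ ω, ∑ k, (M *ᵥ X ω) k ^ 2 ∂μ = trace (M * secondMoment μ X * Mᵀ) := by
    rw [integral_finsetSum _ fun k _ => hint k, trace_mul_mul_transpose]
    exact Finset.sum_congr rfl fun k _ => integral_dotProduct_sq hX (M k)
  rw [← hsum]
  exact integral_sqrt_le_sqrt_integral (integrable_finsetSum _ fun k _ => hint k)
    (Filter.Eventually.of_forall fun ω => Finset.sum_nonneg fun k _ => sq_nonneg _)

lemma dotProduct_secondMoment_mulVec_add_mulVec [IsFiniteMeasure μ] [DecidableEq κ]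
    (A : Matrix m ι ℝ) (F : Matrix m κ ℝ) {X : Ω → ι → ℝ} {Y : Ω → κ → ℝ}
    (hX : ∀ i, MemLp (fun ω => X ω i) 2 μ) (hY : ∀ k, MemLp (fun ω => Y ω k) 2 μ)
    (hXY : IndepFun X Y μ) (hY0 : ∀ k, ∫ ω, Y ω k ∂μ = 0) (hYcov : secondMoment μ Y = 1)
    (v : m → ℝ) :
    v ⬝ᵥ secondMoment μ (fun ω => A *ᵥ X ω + F *ᵥ Y ω) *ᵥ v
      = v ⬝ᵥ (A * secondMoment μ X * Aᵀ + F * Fᵀ) *ᵥ v := by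
  have hdot : ∀ ω, v ⬝ᵥ (A *ᵥ X ω + F *ᵥ Y ω) = (v ᵥ* A) ⬝ᵥ X ω + (v ᵥ* F) ⬝ᵥ Y ω :=
    fun ω => by rw [dotProduct_add, dotProduct_mulVec, dotProduct_mulVec]
  have hZ : ∀ j, MemLp (fun ω => (A *ᵥ X ω + F *ᵥ Y ω) j) 2 μ :=
    fun j => (memLp_dotProduct hX (A j)).add (memLp_dotProduct hY (F j))
  have hind : IndepFun (fun ω => (v ᵥ* A) ⬝ᵥ X ω) (fun ω => (v ᵥ* F) ⬝ᵥ Y ω) μ :=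
    hXY.comp (φ := ((v ᵥ* A) ⬝ᵥ ·)) (ψ := ((v ᵥ* F) ⬝ᵥ ·)) (by fun_prop) (by fun_prop)
  have hmean : ∫ ω, (v ᵥ* F) ⬝ᵥ Y ω ∂μ = 0 :=
    integral_dotProduct_eq_zero (fun k => (hY k).integrable one_le_two) hY0 _
  rw [← integral_dotProduct_sq hZ]
  simp_rw [hdot]
  rw [hind.integral_add_sq (memLp_dotProduct hX _) (memLp_dotProduct hY _) hmean,
    integral_dotProduct_sq hX, integral_dotProduct_sq hY, hYcov, add_mulVec, dotProduct_add,
    dotProduct_mul_mul_transpose_mulVec, ← dotProduct_mul_mul_transpose_mulVec F 1,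
    Matrix.mul_one]

end ProbabilityTheory

theorem expected_deviation_uniformly_bounded_general (N d q : ℕ)
    {Ω : Type*} [MeasurableSpace Ω] (μ : Measure Ω) [IsProbabilityMeasure μ]
    (Acl : Matrix (Fin N) (Fin N) ℝ) (Ft : Matrix (Fin N) (Fin d) ℝ)
    (Q : Matrix (Fin N) (Fin N) ℝ)
    (hLyap : LoewnerLE (Acl * Q * Aclᵀ + Ft * Ftᵀ) Q)
    (E : ℕ → Ω → (Fin N → ℝ)) (W : ℕ → Ω → (Fin d → ℝ))
    (hE2 : ∀ t i, MemLp (fun ω => E t ω i) 2 μ)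
    (hW2 : ∀ t i, MemLp (fun ω => W t ω i) 2 μ)
    (hindep : ∀ t, IndepFun (E t) (W t) μ)
    (hWmean : ∀ t i, (∫ ω, W t ω i ∂μ) = 0)
    (hWcov : ∀ t i j, (∫ ω, W t ω i * W t ω j ∂μ) = (1 : Matrix (Fin d) (Fin d) ℝ) i j)
    (hdyn : ∀ t ω, E (t + 1) ω = Acl.mulVec (E t ω) + Ft.mulVec (W t ω))
    (hInit : LoewnerLE (Matrix.of fun i j => ∫ ω, E 0 ω i * E 0 ω j ∂μ) Q)
    (M : Matrix (Fin q) (Fin N) ℝ) :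
    ∀ t, (∫ ω, Real.sqrt (∑ i, (M.mulVec (E t ω)) i ^ 2) ∂μ) ≤
      Real.sqrt (Matrix.trace (M * Q * Mᵀ)) := by
  have hmoment : ∀ t v, v ⬝ᵥ secondMoment μ (E t) *ᵥ v ≤ v ⬝ᵥ Q *ᵥ v := by
    intro t
    induction t with
    | zero => exact hInit.dotProduct_mulVec_le
    | succ t ih =>
      intro v
      rw [show E (t + 1) = _ from funext (hdyn t), dotProduct_secondMoment_mulVec_add_mulVec
        Acl Ft (hE2 t) (hW2 t) (hindep t) (hWmean t) (ext (hWcov t))]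
      exact dotProduct_lyapunov_mulVec_le ih hLyap v
  intro t
  calc (∫ ω, √(∑ i, (M *ᵥ E t ω) i ^ 2) ∂μ)
      ≤ √(trace (M * secondMoment μ (E t) * Mᵀ)) := integral_sqrt_sum_mulVec_sq_le (hE2 t) M
    _ ≤ √(trace (M * Q * Mᵀ)) := by
      rw [trace_mul_mul_transpose, trace_mul_mul_transpose]
      exact Real.sqrt_le_sqrt (Finset.sum_le_sum fun i _ => hmoment t (M i))

theorem expected_deviation_uniformly_bounded (N d q : ℕ)
    {Ω : Type*} [MeasurableSpace Ω] (μ : Measure Ω) [IsProbabilityMeasure μ]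
    (Acl : Matrix (Fin N) (Fin N) ℝ) (Ft : Matrix (Fin N) (Fin d) ℝ)
    (Q : Matrix (Fin N) (Fin N) ℝ) (hQ : Q.PosSemidef)
    (hLyap : LoewnerLE (Acl * Q * Aclᵀ + Ft * Ftᵀ) Q)
    (E : ℕ → Ω → (Fin N → ℝ)) (W : ℕ → Ω → (Fin d → ℝ))
    (hEmeas : ∀ t, Measurable (E t)) (hWmeas : ∀ t, Measurable (W t))
    (hE2 : ∀ t i, MemLp (fun ω => E t ω i) 2 μ)
    (hW2 : ∀ t i, MemLp (fun ω => W t ω i) 2 μ)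
    (hindep : ∀ t, IndepFun (E t) (W t) μ)
    (hWmean : ∀ t i, (∫ ω, W t ω i ∂μ) = 0)
    (hWcov : ∀ t i j, (∫ ω, W t ω i * W t ω j ∂μ) = (1 : Matrix (Fin d) (Fin d) ℝ) i j)
    (hdyn : ∀ t ω, E (t + 1) ω = Acl.mulVec (E t ω) + Ft.mulVec (W t ω))
    (hInit : LoewnerLE (Matrix.of fun i j => ∫ ω, E 0 ω i * E 0 ω j ∂μ) Q)
    (M : Matrix (Fin q) (Fin N) ℝ) :
    ∀ t, (∫ ω, Real.sqrt (∑ i, (M.mulVec (E t ω)) i ^ 2) ∂μ) ≤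
      Real.sqrt (Matrix.trace (M * Q * Mᵀ)) :=
  expected_deviation_uniformly_bounded_general N d q μ Acl Ft Q hLyap E W hE2 hW2 hindep hWmean
    hWcov hdyn hInit M
end
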